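/- arXiv:2110.10097 — 7 statements merged into one kernel-verified Lean document; each statement's English description precedes it below -/
import Mathlib

section
/- Assume the smallest CAV index satisfies i₁ = 1 (the vehicle immediately behind the head vehicle is a CAV) and that α₁ − α₂α₃ + α₃² ≠ 0. Then the pair (A, B) of the mixed-traffic system is controllable, i.e. the controllability matrix [B, AB, …, A^{2n−1}B] ∈ ℝ^{2n×(2nm)} has rank 2n. -/
open Matrix

/-- The controllability matrix `[B, AB, …, A^{N−1}B]` of a pair `(A, B)`. -/
noncomputable def ctrbMat {N p : ℕ} (A : Matrix (Fin N) (Fin N) ℝ)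
    (B : Matrix (Fin N) (Fin p) ℝ) : Matrix (Fin N) (Fin N × Fin p) ℝ :=
  Matrix.of fun r kj => (A ^ (kj.1 : ℕ) * B) r kj.2

/-- The observability matrix `col(C, CA, …, CA^{N−1})` of a pair `(A, C)`. -/
noncomputable def obsvMat {N p : ℕ} (A : Matrix (Fin N) (Fin N) ℝ)
    (C : Matrix (Fin p) (Fin N) ℝ) : Matrix (Fin N × Fin p) (Fin N) ℝ :=
  Matrix.of fun kj c => (C * A ^ (kj.1 : ℕ)) kj.2 c

noncomputable def matP1 (α1 α2 : ℝ) : Matrix (Fin 2) (Fin 2) ℝ := !![0, -1; α1, -α2]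
noncomputable def matP2 (α3 : ℝ) : Matrix (Fin 2) (Fin 2) ℝ := !![0, 1; 0, α3]
noncomputable def matS1 : Matrix (Fin 2) (Fin 2) ℝ := !![(0:ℝ), -1; 0, 0]
noncomputable def matS2 : Matrix (Fin 2) (Fin 2) ℝ := !![(0:ℝ), 1; 0, 0]

def fin2 (k : ℕ) : Fin 2 := ⟨k % 2, Nat.mod_lt _ (by norm_num)⟩

/-- The mixed-traffic system matrix `A ∈ ℝ^{2n×2n}` (vehicles 0-indexed `0,…,n−1`;
the CAV locations are given by the strictly increasing map `ι : Fin m → Fin n`).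
Block `(i,i)` is `S₁` if vehicle `i` is a CAV, `P₁` otherwise; block `(i,i−1)` is
`S₂` if vehicle `i` is a CAV, `P₂` otherwise; all other blocks vanish. -/
noncomputable def trafficA (n m : ℕ) (ι : Fin m → Fin n) (α1 α2 α3 : ℝ) :
    Matrix (Fin (2 * n)) (Fin (2 * n)) ℝ :=
  Matrix.of fun r c =>
    if (r : ℕ) / 2 = (c : ℕ) / 2 then
      (if ∃ k, (ι k : ℕ) = (r : ℕ) / 2 then matS1 (fin2 r) (fin2 c)
       else matP1 α1 α2 (fin2 r) (fin2 c))
    else if (r : ℕ) / 2 = (c : ℕ) / 2 + 1 then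
      (if ∃ k, (ι k : ℕ) = (r : ℕ) / 2 then matS2 (fin2 r) (fin2 c)
       else matP2 α3 (fin2 r) (fin2 c))
    else 0

/-- The input matrix `B ∈ ℝ^{2n×m}`: the `k`-th column is the standard basis
vector whose nonzero entry sits at the (0-indexed) position `2·ι(k)+1`,
i.e. the velocity component of the `k`-th CAV. -/
noncomputable def trafficB (n m : ℕ) (ι : Fin m → Fin n) :
    Matrix (Fin (2 * n)) (Fin m) ℝ :=
  Matrix.of fun r k => if (r : ℕ) = 2 * (ι k : ℕ) + 1 then 1 else 0

/-- The output matrix `C ∈ ℝ^{(n+m)×2n}`: the first `n` rows pick out the velocity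
errors of all vehicles, the last `m` rows pick out the spacing errors of the CAVs. -/
noncomputable def trafficC (n m : ℕ) (ι : Fin m → Fin n) :
    Matrix (Fin (n + m)) (Fin (2 * n)) ℝ :=
  Matrix.of fun j c =>
    if h : (j : ℕ) < n then (if (c : ℕ) = 2 * (j : ℕ) + 1 then 1 else 0)
    else (if (c : ℕ) = 2 * (ι ⟨(j : ℕ) - n, by have := j.isLt; omega⟩ : ℕ) then 1 else 0)

lemma fin2_even {k : ℕ} (h : k % 2 = 0) : fin2 k = 0 := by
  simp [fin2, Fin.ext_iff, h]

lemma fin2_odd {k : ℕ} (h : k % 2 = 1) : fin2 k = 1 := by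
  simp [fin2, Fin.ext_iff, h]

lemma trafficA_colS {n m : ℕ} (ι : Fin m → Fin n) (α1 α2 α3 : ℝ) {i : ℕ}
    (h2 : 2 * i < 2 * n) (r : Fin (2 * n)) :
    trafficA n m ι α1 α2 α3 r ⟨2 * i, h2⟩ =
      if (r : ℕ) = 2 * i + 1 then (if ∃ k, (ι k : ℕ) = i then 0 else α1) else 0 := by
  have hc : ((⟨2 * i, h2⟩ : Fin (2 * n)) : ℕ) = 2 * i := rfl
  simp only [trafficA, Matrix.of_apply, hc]
  have h2i : 2 * i / 2 = i := by omega
  rw [h2i]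
  by_cases hd : (r : ℕ) / 2 = i
  · rw [if_pos hd, hd]
    rcases Nat.mod_two_eq_zero_or_one (r : ℕ) with hp | hp
    · rw [fin2_even hp]
      have hr : (r : ℕ) = 2 * i := by omega
      rw [hr, fin2_even (by omega : 2 * i % 2 = 0)]
      split_ifs <;> first | omega | norm_num [matS1, matP1]
    · rw [fin2_odd hp]
      have hr : (r : ℕ) = 2 * i + 1 := by omega
      rw [hr, fin2_even (by omega : 2 * i % 2 = 0)]
      split_ifs <;> first | omega | norm_num [matS1, matP1]
  · rw [if_neg hd]
    by_cases hd2 : (r : ℕ) / 2 = i + 1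
    · rw [if_pos hd2, hd2]
      rw [if_neg (by omega : ¬ (r : ℕ) = 2 * i + 1), fin2_even (by omega : 2 * i % 2 = 0)]
      rcases Nat.mod_two_eq_zero_or_one (r : ℕ) with hp | hp <;>
        [rw [fin2_even hp]; rw [fin2_odd hp]] <;> split_ifs <;> first | omega | norm_num [matS2, matP2]
    · rw [if_neg hd2, if_neg (by omega : ¬ (r : ℕ) = 2 * i + 1)]

lemma trafficA_colV {n m : ℕ} (ι : Fin m → Fin n) (α1 α2 α3 : ℝ) {i : ℕ}
    (h2 : 2 * i + 1 < 2 * n) (r : Fin (2 * n)) :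
    trafficA n m ι α1 α2 α3 r ⟨2 * i + 1, h2⟩ =
      (if (r : ℕ) = 2 * i then (-1 : ℝ) else 0)
      + (if (r : ℕ) = 2 * i + 1 then (if ∃ k, (ι k : ℕ) = i then 0 else -α2) else 0)
      + (if (r : ℕ) = 2 * i + 2 then (1 : ℝ) else 0)
      + (if (r : ℕ) = 2 * i + 3 then (if ∃ k, (ι k : ℕ) = i + 1 then 0 else α3) else 0) := by
  have hc : ((⟨2 * i + 1, h2⟩ : Fin (2 * n)) : ℕ) = 2 * i + 1 := rfl
  simp only [trafficA, Matrix.of_apply, hc]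
  have h2i : (2 * i + 1) / 2 = i := by omega
  rw [h2i, fin2_odd (by omega : (2 * i + 1) % 2 = 1)]
  by_cases hd : (r : ℕ) / 2 = i
  · rw [if_pos hd, hd]
    rcases Nat.mod_two_eq_zero_or_one (r : ℕ) with hp | hp
    · rw [fin2_even hp]
      have hr : (r : ℕ) = 2 * i := by omega
      rw [hr]
      split_ifs <;> first | omega | norm_num [matS1, matP1]
    · rw [fin2_odd hp]
      have hr : (r : ℕ) = 2 * i + 1 := by omega
      rw [hr]
      split_ifs <;> first | omega | norm_num [matS1, matP1]
  · rw [if_neg hd]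
    by_cases hd2 : (r : ℕ) / 2 = i + 1
    · rw [if_pos hd2, hd2]
      rcases Nat.mod_two_eq_zero_or_one (r : ℕ) with hp | hp
      · rw [fin2_even hp]
        have hr : (r : ℕ) = 2 * i + 2 := by omega
        rw [hr]
        split_ifs <;> first | omega | norm_num [matS2, matP2]
      · rw [fin2_odd hp]
        have hr : (r : ℕ) = 2 * i + 3 := by omega
        rw [hr]
        split_ifs <;> first | omega | norm_num [matS2, matP2]
    · rw [if_neg hd2, if_neg (by omega : ¬ (r : ℕ) = 2 * i),
        if_neg (by omega : ¬ (r : ℕ) = 2 * i + 1), if_neg (by omega : ¬ (r : ℕ) = 2 * i + 2),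
        if_neg (by omega : ¬ (r : ℕ) = 2 * i + 3)]
      ring

noncomputable def pdd {N : ℕ} (v : Fin N → ℂ) (t : ℕ) : ℂ := if h : t < N then v ⟨t, h⟩ else 0

lemma sum_if_single {N : ℕ} (v : Fin N → ℂ) (t : ℕ) (a : ℂ) :
    (∑ r : Fin N, (if (r : ℕ) = t then a else 0) * v r) = a * pdd v t := by
  by_cases h : t < N
  · rw [pdd, dif_pos h, Finset.sum_eq_single (⟨t, h⟩ : Fin N)]
    · rw [if_pos rfl]
    · intro b _ hb
      rw [if_neg fun hc => hb (Fin.ext hc), zero_mul]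
    · intro hh; exact absurd (Finset.mem_univ _) hh
  · rw [pdd, dif_neg h, mul_zero]
    apply Finset.sum_eq_zero
    intro r _
    rw [if_neg (by have := r.isLt; omega), zero_mul]

theorem eig_zero {n m : ℕ} (hn : 1 ≤ n) (hm : 1 ≤ m) (ι : Fin m → Fin n)
    (α1 α2 α3 : ℝ) (hα1 : 0 < α1) (hα3 : 0 < α3)
    (hfirst : (ι ⟨0, hm⟩ : ℕ) = 0)
    (hcond : α1 - α2 * α3 + α3 ^ 2 ≠ 0)
    (lam : ℂ) (v : Fin (2 * n) → ℂ)
    (hC : ∀ j : Fin m, v ⟨2 * (ι j : ℕ) + 1, by have := (ι j).isLt; omega⟩ = 0)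
    (heig : ∀ c : Fin (2 * n),
      (∑ r, ((trafficA n m ι α1 α2 α3 r c : ℝ) : ℂ) * v r) = lam * v c) :
    v = 0 := by
  classical
  have hpd_top : ∀ t, 2 * n ≤ t → pdd v t = 0 := fun t ht => dif_neg (by omega)
  have hpd_eq : ∀ (t : ℕ) (h : t < 2 * n), pdd v t = v ⟨t, h⟩ := fun t h => dif_pos h
  have hCAV : ∀ i : ℕ, (∃ k, (ι k : ℕ) = i) → pdd v (2 * i + 1) = 0 := by
    rintro i ⟨k, rfl⟩
    rw [hpd_eq _ (by have := (ι k).isLt; omega)]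
    exact hC k
  have eqS : ∀ i, i < n →
      (if ∃ k, (ι k : ℕ) = i then 0 else (α1 : ℂ)) * pdd v (2 * i + 1)
        = lam * pdd v (2 * i) := by
    intro i hi
    have h2 : 2 * i < 2 * n := by omega
    have h := heig ⟨2 * i, h2⟩
    rw [show (∑ r, ((trafficA n m ι α1 α2 α3 r ⟨2 * i, h2⟩ : ℝ) : ℂ) * v r)
        = ∑ r : Fin (2 * n), (if (r : ℕ) = 2 * i + 1 then
            (if ∃ k, (ι k : ℕ) = i then 0 else (α1 : ℂ)) else 0) * v r from
      Finset.sum_congr rfl fun r _ => by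
        rw [trafficA_colS ι α1 α2 α3 h2 r]
        push_cast [apply_ite (fun x : ℝ => (x : ℂ))]
        ring] at h
    rw [sum_if_single] at h
    rw [h, hpd_eq _ h2]
  have eqV : ∀ i, i < n →
      (-1 : ℂ) * pdd v (2 * i)
      + (if ∃ k, (ι k : ℕ) = i then 0 else (-α2 : ℂ)) * pdd v (2 * i + 1)
      + (1 : ℂ) * pdd v (2 * i + 2)
      + (if ∃ k, (ι k : ℕ) = i + 1 then 0 else (α3 : ℂ)) * pdd v (2 * i + 3)
      = lam * pdd v (2 * i + 1) := by
    intro i hi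
    have h2 : 2 * i + 1 < 2 * n := by omega
    have h := heig ⟨2 * i + 1, h2⟩
    rw [show (∑ r, ((trafficA n m ι α1 α2 α3 r ⟨2 * i + 1, h2⟩ : ℝ) : ℂ) * v r)
        = ∑ r : Fin (2 * n),
          ((if (r : ℕ) = 2 * i then (-1 : ℂ) else 0) * v r
          + (if (r : ℕ) = 2 * i + 1 then
              (if ∃ k, (ι k : ℕ) = i then 0 else (-α2 : ℂ)) else 0) * v r
          + (if (r : ℕ) = 2 * i + 2 then (1 : ℂ) else 0) * v r
          + (if (r : ℕ) = 2 * i + 3 then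
              (if ∃ k, (ι k : ℕ) = i + 1 then 0 else (α3 : ℂ)) else 0) * v r) from
      Finset.sum_congr rfl fun r _ => by
        rw [trafficA_colV ι α1 α2 α3 h2 r]
        push_cast [apply_ite (fun x : ℝ => (x : ℂ))]
        ring] at h
    rw [Finset.sum_add_distrib, Finset.sum_add_distrib, Finset.sum_add_distrib,
      sum_if_single, sum_if_single, sum_if_single, sum_if_single] at h
    rw [← hpd_eq _ h2] at h
    exact h
  set φ : ℕ → ℂ := fun i =>
    pdd v (2 * i) + (if ∃ k, (ι k : ℕ) = i then 0 else (α3 : ℂ)) * pdd v (2 * i + 1) with hφ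
  have hφtop : ∀ i, n ≤ i → φ i = 0 := by
    intro i hi
    simp only [hφ]
    rw [hpd_top _ (by omega), hpd_top _ (by omega), mul_zero, add_zero]
  have eqV' : ∀ i, i < n →
      -pdd v (2 * i) + (if ∃ k, (ι k : ℕ) = i then 0 else (-α2 : ℂ)) * pdd v (2 * i + 1)
        + φ (i + 1) = lam * pdd v (2 * i + 1) := by
    intro i hi
    have h := eqV i hi
    simp only [hφ]
    rw [show 2 * (i + 1) = 2 * i + 2 by ring, show 2 * i + 2 + 1 = 2 * i + 3 by ring]
    linear_combination h
  suffices hall : ∀ t, pdd v t = 0 by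
    funext r
    have h := hall (r : ℕ)
    rw [hpd_eq _ r.isLt] at h
    simpa using h
  suffices hp2 : ∀ i, pdd v (2 * i) = 0 ∧ pdd v (2 * i + 1) = 0 by
    intro t
    rcases Nat.even_or_odd t with ⟨q, hq⟩ | ⟨q, hq⟩
    · have h := (hp2 q).1; rwa [show 2 * q = t by omega] at h
    · have h := (hp2 q).2; rwa [show 2 * q + 1 = t by omega] at h
  by_cases hlam : lam = 0
  · -- λ = 0
    have hodd : ∀ i, pdd v (2 * i + 1) = 0 := by
      intro i
      by_cases hin : i < n
      · by_cases hc : ∃ k, (ι k : ℕ) = i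
        · exact hCAV i hc
        · have h := eqS i hin
          rw [if_neg hc, hlam, zero_mul] at h
          exact (mul_eq_zero.mp h).resolve_left (Complex.ofReal_ne_zero.mpr (ne_of_gt hα1))
      · exact hpd_top _ (by omega)
    have heven : ∀ j i, n ≤ i + j → pdd v (2 * i) = 0 := by
      intro j
      induction j with
      | zero => intro i hi; exact hpd_top _ (by omega)
      | succ j ih =>
        intro i hi
        by_cases hin : i < n
        · have hφ1 : φ (i + 1) = 0 := by
            simp only [hφ]
            rw [ih (i + 1) (by omega), hodd (i + 1), mul_zero, add_zero]
          have h := eqV' i hin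
          rw [hφ1, hodd i, hlam] at h
          simpa using h
        · exact hpd_top _ (by omega)
    intro i
    exact ⟨heven n i (by omega), hodd i⟩
  · -- λ ≠ 0
    have hcavz : ∀ i, (∃ k, (ι k : ℕ) = i) →
        pdd v (2 * i) = 0 ∧ pdd v (2 * i + 1) = 0 := by
      intro i hc
      by_cases hin : i < n
      · have h := eqS i hin
        rw [if_pos hc, zero_mul] at h
        exact ⟨(mul_eq_zero.mp h.symm).resolve_left hlam, hCAV i hc⟩
      · exact ⟨hpd_top _ (by omega), hpd_top _ (by omega)⟩
    by_cases hbad : (α1 : ℂ) + lam * α3 = 0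
    · -- λ = -α1/α3
      have hφ0 : ∀ i, φ i = 0 := by
        intro i
        by_cases hin : i < n
        · by_cases hc : ∃ k, (ι k : ℕ) = i
          · simp only [hφ]
            rw [if_pos hc, zero_mul, add_zero]
            exact (hcavz i hc).1
          · have h := eqS i hin
            rw [if_neg hc] at h
            have hl : lam * φ i = 0 := by
              simp only [hφ]
              rw [if_neg hc]
              linear_combination pdd v (2 * i + 1) * hbad - h
            exact (mul_eq_zero.mp hl).resolve_left hlam
        · exact hφtop i (by omega)
      intro i
      by_cases hin : i < n
      · by_cases hc : ∃ k, (ι k : ℕ) = i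
        · exact hcavz i hc
        · have h1 := eqS i hin
          rw [if_neg hc] at h1
          have h2 := eqV' i hin
          rw [if_neg hc, hφ0 (i + 1)] at h2
          have h3 := hφ0 i
          simp only [hφ] at h3
          rw [if_neg hc] at h3
          have hfac : ((α3 : ℂ) - α2 - lam) * pdd v (2 * i + 1) = 0 := by
            linear_combination h2 + h3
          have hfne : ((α3 : ℂ) - α2 - lam) ≠ 0 := by
            intro hzz
            apply hcond
            have hl : lam = (α3 : ℂ) - α2 := by linear_combination -hzz
            rw [hl] at hbad
            have hcc : ((α1 - α2 * α3 + α3 ^ 2 : ℝ) : ℂ) = 0 := by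
              push_cast
              linear_combination hbad
            exact_mod_cast hcc
          have hpo : pdd v (2 * i + 1) = 0 := (mul_eq_zero.mp hfac).resolve_left hfne
          refine ⟨?_, hpo⟩
          rw [hpo, mul_zero, add_zero] at h3
          exact h3
      · exact ⟨hpd_top _ (by omega), hpd_top _ (by omega)⟩
    · -- α1 + λα3 ≠ 0
      have main : ∀ i, pdd v (2 * i) = 0 ∧ pdd v (2 * i + 1) = 0 ∧ φ (i + 1) = 0 := by
        intro i
        induction i with
        | zero =>
          have hc0 : ∃ k, (ι k : ℕ) = 0 := ⟨⟨0, hm⟩, hfirst⟩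
          obtain ⟨he, ho⟩ := hcavz 0 hc0
          refine ⟨he, ho, ?_⟩
          have h := eqV' 0 hn
          rw [if_pos hc0, zero_mul, add_zero, he, ho, neg_zero, zero_add, mul_zero] at h
          exact h
        | succ i ih =>
          obtain ⟨-, -, hφ1⟩ := ih
          by_cases hin : i + 1 < n
          · by_cases hc : ∃ k, (ι k : ℕ) = i + 1
            · obtain ⟨he, ho⟩ := hcavz (i + 1) hc
              refine ⟨he, ho, ?_⟩
              have h := eqV' (i + 1) hin
              rw [if_pos hc, zero_mul, add_zero, he, ho, neg_zero, zero_add, mul_zero] at h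
              exact h
            · have h3 : pdd v (2 * (i + 1)) + (α3 : ℂ) * pdd v (2 * (i + 1) + 1) = 0 := by
                have h := hφ1
                simp only [hφ] at h
                rwa [if_neg hc] at h
              have h1 := eqS (i + 1) hin
              rw [if_neg hc] at h1
              have ho : pdd v (2 * (i + 1) + 1) = 0 := by
                have hfa : ((α1 : ℂ) + lam * α3) * pdd v (2 * (i + 1) + 1) = 0 := by
                  linear_combination h1 + lam * h3
                exact (mul_eq_zero.mp hfa).resolve_left hbad
              have he : pdd v (2 * (i + 1)) = 0 := by
                rwa [ho, mul_zero, add_zero] at h3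
              refine ⟨he, ho, ?_⟩
              have h := eqV' (i + 1) hin
              rw [if_neg hc, he, ho, mul_zero, neg_zero, zero_add, zero_add, mul_zero] at h
              exact h
          · exact ⟨hpd_top _ (by omega), hpd_top _ (by omega), hφtop _ (by omega)⟩
      intro i
      exact ⟨(main i).1, (main i).2.1⟩

lemma vpos_lt {n m : ℕ} (ι : Fin m → Fin n) (j : Fin m) : 2 * (ι j : ℕ) + 1 < 2 * n := by
  have := (ι j).isLt; omega

lemma mul_trafficB {n m : ℕ} (ι : Fin m → Fin n) (N : Matrix (Fin (2 * n)) (Fin (2 * n)) ℝ)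
    (r : Fin (2 * n)) (j : Fin m) :
    (N * trafficB n m ι) r j = N r ⟨2 * (ι j : ℕ) + 1, vpos_lt ι j⟩ := by
  rw [Matrix.mul_apply, Finset.sum_eq_single (⟨2 * (ι j : ℕ) + 1, vpos_lt ι j⟩ : Fin (2 * n))]
  · simp [trafficB]
  · intro b _ hb
    simp only [trafficB, Matrix.of_apply]
    rw [if_neg (fun hc => hb (Fin.ext hc)), mul_zero]
  · intro hh; exact absurd (Finset.mem_univ _) hh

theorem kernel_zero {n m : ℕ} (hn : 1 ≤ n) (hm : 1 ≤ m) (ι : Fin m → Fin n)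
    (α1 α2 α3 : ℝ) (hα1 : 0 < α1) (hα3 : 0 < α3)
    (hfirst : (ι ⟨0, hm⟩ : ℕ) = 0) (hcond : α1 - α2 * α3 + α3 ^ 2 ≠ 0)
    (x : Fin (2 * n) → ℝ)
    (hx : ∀ (k : ℕ) (j : Fin m),
      ∑ r, x r * (trafficA n m ι α1 α2 α3 ^ k) r ⟨2 * (ι j : ℕ) + 1, vpos_lt ι j⟩ = 0) :
    x = 0 := by
  classical
  by_contra hx0
  set A := trafficA n m ι α1 α2 α3 with hA
  set z : Fin (2 * n) → ℂ := fun r => (x r : ℂ) with hz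
  have hz0 : z ≠ 0 := by
    intro hzz
    apply hx0
    funext r
    have h := congrFun hzz r
    simpa [hz, Complex.ofReal_eq_zero] using h
  set Ac : Matrix (Fin (2 * n)) (Fin (2 * n)) ℂ := A.map (fun a => (a : ℂ)) with hAc
  have hAcpow : ∀ k : ℕ, Ac ^ k = (A ^ k).map (fun a => (a : ℂ)) := by
    intro k
    have h1 : Ac = Complex.ofRealHom.mapMatrix A := rfl
    rw [h1, ← map_pow, RingHom.mapMatrix_apply]
    rfl
  set F : Module.End ℂ (Fin (2 * n) → ℂ) := Matrix.mulVecLin Acᵀ with hF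
  have hFpow : ∀ k : ℕ, (F ^ k) z = (Acᵀ ^ k).mulVec z := by
    intro k
    induction k with
    | zero => simp [Matrix.one_mulVec]
    | succ k ih =>
      rw [pow_succ', Module.End.mul_apply, ih, hF, Matrix.mulVecLin_apply,
        Matrix.mulVec_mulVec, ← pow_succ']
  have hconstr : ∀ (k : ℕ) (j : Fin m),
      ((F ^ k) z) ⟨2 * (ι j : ℕ) + 1, vpos_lt ι j⟩ = 0 := by
    intro k j
    rw [hFpow, ← Matrix.transpose_pow]
    simp only [Matrix.mulVec, dotProduct, Matrix.transpose_apply, hAcpow,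
      Matrix.map_apply, hz]
    have h2 : ((∑ r, x r * (A ^ k) r ⟨2 * (ι j : ℕ) + 1, vpos_lt ι j⟩ : ℝ) : ℂ) = 0 := by
      rw [hx k j]; norm_num
    rw [Complex.ofReal_sum] at h2
    rw [← h2]
    refine Finset.sum_congr rfl fun r _ => ?_
    push_cast
    ring
  set W := Submodule.span ℂ (Set.range fun k : ℕ => (F ^ k) z) with hW
  have hzW : z ∈ W := Submodule.subset_span ⟨0, by simp⟩
  have hWinv : ∀ u ∈ W, F u ∈ W := by
    intro u hu
    have hmap : Submodule.map F W ≤ W := by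
      rw [hW, Submodule.map_span]
      apply Submodule.span_le.mpr
      rintro _ ⟨_, ⟨k, rfl⟩, rfl⟩
      apply Submodule.subset_span
      exact ⟨k + 1, by show (F ^ (k + 1)) z = F ((F ^ k) z); rw [pow_succ', Module.End.mul_apply]⟩
    exact hmap (Submodule.mem_map_of_mem hu)
  have hWC : ∀ u ∈ W, ∀ j : Fin m, u ⟨2 * (ι j : ℕ) + 1, vpos_lt ι j⟩ = 0 := by
    intro u hu j
    have hle : W ≤ LinearMap.ker
        (LinearMap.proj (R := ℂ) (φ := fun _ : Fin (2 * n) => ℂ)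
          ⟨2 * (ι j : ℕ) + 1, vpos_lt ι j⟩) := by
      rw [hW]
      apply Submodule.span_le.mpr
      rintro _ ⟨k, rfl⟩
      simp only [SetLike.mem_coe, LinearMap.mem_ker, LinearMap.proj_apply]
      exact hconstr k j
    have h := hle hu
    simpa using h
  haveI : Nontrivial W :=
    ⟨⟨z, hzW⟩, 0, fun hcon => hz0 (by simpa [Submodule.mk_eq_zero] using hcon)⟩
  obtain ⟨μ, hμ⟩ := Module.End.exists_eigenvalue (F.restrict hWinv)
  obtain ⟨vv, hvv⟩ := hμ.exists_hasEigenvector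
  have heq : F ↑vv = μ • (vv : Fin (2 * n) → ℂ) := by
    have h1 := hvv.apply_eq_smul
    have h2 := congrArg Subtype.val h1
    rw [LinearMap.restrict_apply] at h2
    simpa using h2
  have hvC : ∀ j : Fin m, (vv : Fin (2 * n) → ℂ) ⟨2 * (ι j : ℕ) + 1, vpos_lt ι j⟩ = 0 :=
    fun j => hWC _ vv.2 j
  have heig : ∀ c : Fin (2 * n),
      (∑ r, ((A r c : ℝ) : ℂ) * (vv : Fin (2 * n) → ℂ) r)
        = μ * (vv : Fin (2 * n) → ℂ) c := by
    intro c
    have h1 := congrFun heq c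
    rw [hF, Matrix.mulVecLin_apply] at h1
    simpa [Matrix.mulVec, dotProduct, Matrix.transpose_apply, hAc, Matrix.map_apply,
      Pi.smul_apply, smul_eq_mul] using h1
  have hv0 := eig_zero hn hm ι α1 α2 α3 hα1 hα3 hfirst hcond μ
    (vv : Fin (2 * n) → ℂ) hvC heig
  exact hvv.right (Subtype.ext hv0)

/-- **Theorem 1(1) (Controllability).** If the vehicle immediately behind the head
vehicle is a CAV (`ι 0 = 0` in 0-indexed notation, i.e. `i₁ = 1`) and
`α₁ − α₂α₃ + α₃² ≠ 0`, then the mixed-traffic pair `(A, B)` is controllable: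
the controllability matrix `[B, AB, …, A^{2n−1}B]` has rank `2n`. -/
theorem mixed_traffic_controllable_of_first_vehicle_CAV
    (n m : ℕ) (hn : 1 ≤ n) (hm : 1 ≤ m) (hmn : m ≤ n)
    (ι : Fin m → Fin n) (hmono : StrictMono ι)
    (α1 α2 α3 : ℝ) (hα1 : 0 < α1) (hα3 : 0 < α3) (hα23 : α3 < α2)
    (hfirst : (ι ⟨0, hm⟩ : ℕ) = 0)
    (hcond : α1 - α2 * α3 + α3 ^ 2 ≠ 0) :
    (ctrbMat (trafficA n m ι α1 α2 α3) (trafficB n m ι)).rank = 2 * n := by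
  classical
  have key0 : ∀ x : Fin (2 * n) → ℝ,
      (ctrbMat (trafficA n m ι α1 α2 α3) (trafficB n m ι))ᵀ.mulVec x = 0 → x = 0 := by
    intro x hx
    have hk : ∀ (k : ℕ), k < 2 * n → ∀ (j : Fin m),
        ∑ r, x r * (trafficA n m ι α1 α2 α3 ^ k) r ⟨2 * (ι j : ℕ) + 1, vpos_lt ι j⟩ = 0 := by
      intro k hklt j
      have h1 := congrFun hx (⟨k, hklt⟩, j)
      simp only [Matrix.mulVec, dotProduct, Matrix.transpose_apply, Pi.zero_apply] at h1
      rw [← h1]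
      refine Finset.sum_congr rfl fun r _ => ?_
      have h2 : ctrbMat (trafficA n m ι α1 α2 α3) (trafficB n m ι) r ((⟨k, hklt⟩ : Fin (2*n)), j)
          = (trafficA n m ι α1 α2 α3 ^ k) r ⟨2 * (ι j : ℕ) + 1, vpos_lt ι j⟩ := by
        show (trafficA n m ι α1 α2 α3 ^ k * trafficB n m ι) r j = _
        exact mul_trafficB ι _ r j
      rw [h2]
      exact mul_comm _ _
    apply kernel_zero hn hm ι α1 α2 α3 hα1 hα3 hfirst hcond x
    intro k j
    rw [Matrix.pow_eq_aeval_mod_charpoly]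
    set p := Polynomial.X ^ k %ₘ (trafficA n m ι α1 α2 α3).charpoly with hp
    have hdeg : p.natDegree < 2 * n := by
      by_cases h0 : p = 0
      · rw [h0]
        simp only [Polynomial.natDegree_zero]
        omega
      · have h1 : p.degree < (trafficA n m ι α1 α2 α3).charpoly.degree :=
          Polynomial.degree_modByMonic_lt _ (Matrix.charpoly_monic _)
        rw [Matrix.charpoly_degree_eq_dim, Fintype.card_fin] at h1
        exact (Polynomial.natDegree_lt_iff_degree_lt h0).mpr h1
    rw [Polynomial.aeval_eq_sum_range' hdeg]
    have hentry : ∀ r : Fin (2 * n),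
        (∑ i ∈ Finset.range (2 * n), p.coeff i • trafficA n m ι α1 α2 α3 ^ i) r
            ⟨2 * (ι j : ℕ) + 1, vpos_lt ι j⟩
        = ∑ i ∈ Finset.range (2 * n),
            p.coeff i * (trafficA n m ι α1 α2 α3 ^ i) r ⟨2 * (ι j : ℕ) + 1, vpos_lt ι j⟩ := by
      intro r
      simp [Matrix.sum_apply, Matrix.smul_apply, smul_eq_mul]
    simp_rw [hentry, Finset.mul_sum]
    rw [Finset.sum_comm]
    apply Finset.sum_eq_zero
    intro i hi
    have hsw : ∑ r : Fin (2 * n),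
        x r * (p.coeff i * (trafficA n m ι α1 α2 α3 ^ i) r ⟨2 * (ι j : ℕ) + 1, vpos_lt ι j⟩)
        = p.coeff i * ∑ r : Fin (2 * n),
            x r * (trafficA n m ι α1 α2 α3 ^ i) r ⟨2 * (ι j : ℕ) + 1, vpos_lt ι j⟩ := by
      rw [Finset.mul_sum]
      exact Finset.sum_congr rfl fun r _ => by ring
    rw [hsw, hk i (Finset.mem_range.mp hi) j, mul_zero]
  have hker : LinearMap.ker
      ((ctrbMat (trafficA n m ι α1 α2 α3) (trafficB n m ι))ᵀ.mulVecLin) = ⊥ :=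
    LinearMap.ker_eq_bot'.mpr fun x hxx =>
      key0 x (by rwa [Matrix.mulVecLin_apply] at hxx)
  have hinj : Function.Injective
      ((ctrbMat (trafficA n m ι α1 α2 α3) (trafficB n m ι))ᵀ.mulVecLin) :=
    LinearMap.ker_eq_bot.mp hker
  rw [← Matrix.rank_transpose, Matrix.rank, LinearMap.finrank_range_of_inj hinj]
  simp [Module.finrank_pi]
end

section
/- Assume the smallest CAV index satisfies i₁ ≥ 2 (the vehicle immediately behind the head vehicle is a human-driven vehicle). Then the pair (A, B) of the mixed-traffic system is not completely controllable; in fact, the controllability matrix [B, AB, …, A^{2n−1}B] has rank at most 2n − 2(i₁ − 1) < 2n. -/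
open Matrix

/-!
Vehicles ahead of the first CAV never feel any control input: each vehicle reacts only to itself
and to its predecessor, so `A` is block lower triangular, while `B` vanishes on the states of
those `i₁ − 1` vehicles. Hence the states vanishing on the first `2(i₁ − 1)` coordinates form an
`A`-invariant subspace containing the range of `B`, and every column `A ^ k * B` of the
controllability matrix lies in this subspace of dimension `2n − 2(i₁ − 1)`.
-/

namespace Matrix

variable {ι κ R : Type*}

theorem pow_mul_apply_eq_zero_of_invariant [Fintype ι] [DecidableEq ι] [Semiring R]
    {A : Matrix ι ι R} {B : Matrix ι κ R} (s : Set ι)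
    (hA : ∀ r ∉ s, ∀ c ∈ s, A r c = 0) (hB : ∀ r ∉ s, ∀ j, B r j = 0) (k : ℕ) :
    ∀ r ∉ s, ∀ j, (A ^ k * B) r j = 0 := by
  induction k with
  | zero => simpa using hB
  | succ k ih =>
    intro r hr j
    rw [pow_succ', Matrix.mul_assoc, mul_apply]
    refine Finset.sum_eq_zero fun c _ => ?_
    by_cases hc : c ∈ s
    · rw [hA r hr c hc, zero_mul]
    · rw [ih c hc j, mul_zero]

theorem rank_le_card_of_apply_eq_zero [Fintype ι] [DecidableEq ι] [Fintype κ] [Field R]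
    {M : Matrix ι κ R} (s : Finset ι) (hM : ∀ r ∉ s, ∀ c, M r c = 0) :
    M.rank ≤ s.card := by
  classical
  have hfactor : M = diagonal (fun r => if r ∈ s then (1 : R) else 0) * M := by
    ext r c
    by_cases hr : r ∈ s <;> simp [diagonal_mul, hr, hM]
  calc M.rank ≤ (diagonal fun r => if r ∈ s then (1 : R) else 0).rank := by
        rw [hfactor]; exact rank_mul_le_left _ _
    _ = s.card := by simp [rank_diagonal]

end Matrix

theorem ctrbMat_rank_le_card_of_invariant {N p : ℕ} {A : Matrix (Fin N) (Fin N) ℝ}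
    {B : Matrix (Fin N) (Fin p) ℝ} (s : Finset (Fin N))
    (hA : ∀ r ∉ s, ∀ c ∈ s, A r c = 0) (hB : ∀ r ∉ s, ∀ j, B r j = 0) :
    (ctrbMat A B).rank ≤ s.card :=
  Matrix.rank_le_card_of_apply_eq_zero s fun r hr kj =>
    Matrix.pow_mul_apply_eq_zero_of_invariant (s : Set (Fin N)) hA hB kj.1 r hr kj.2

theorem trafficA_apply_eq_zero_of_lt {n m : ℕ} (ι : Fin m → Fin n) (α1 α2 α3 : ℝ)
    {r c : Fin (2 * n)} (hrc : (r : ℕ) / 2 < (c : ℕ) / 2) :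
    trafficA n m ι α1 α2 α3 r c = 0 := by
  rw [trafficA, of_apply, if_neg (by omega), if_neg (by omega)]

theorem trafficB_apply_eq_zero_of_lt {n m : ℕ} (hm : 1 ≤ m) {ι : Fin m → Fin n}
    (hι : Monotone ι) {r : Fin (2 * n)} (hr : (r : ℕ) < 2 * (ι ⟨0, hm⟩ : ℕ)) (j : Fin m) :
    trafficB n m ι r j = 0 := by
  have hfirst : (ι ⟨0, hm⟩ : ℕ) ≤ ι j := hι (Fin.mk_le_of_le_val j.val.zero_le)
  rw [trafficB, of_apply, if_neg (by omega)]

theorem mixed_traffic_not_controllable_of_first_vehicle_HDV_general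
    (n m : ℕ) (hm : 1 ≤ m)
    (ι : Fin m → Fin n) (hmono : StrictMono ι)
    (α1 α2 α3 : ℝ)
    (hfirst : 1 ≤ (ι ⟨0, hm⟩ : ℕ)) :
    (ctrbMat (trafficA n m ι α1 α2 α3) (trafficB n m ι)).rank
        ≤ 2 * n - 2 * (ι ⟨0, hm⟩ : ℕ) ∧
      2 * n - 2 * (ι ⟨0, hm⟩ : ℕ) < 2 * n := by
  have hlt : (ι ⟨0, hm⟩ : ℕ) < n := (ι ⟨0, hm⟩).isLt
  let firstCAV : Fin (2 * n) := ⟨2 * ι ⟨0, hm⟩, by omega⟩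
  refine ⟨?_, by omega⟩
  calc (ctrbMat (trafficA n m ι α1 α2 α3) (trafficB n m ι)).rank
      ≤ (Finset.Ici firstCAV).card := by
        refine ctrbMat_rank_le_card_of_invariant _ (fun r hr c hc => ?_) (fun r hr => ?_)
        · simp only [Finset.mem_Ici, not_le, Fin.le_def, firstCAV] at hr hc
          exact trafficA_apply_eq_zero_of_lt ι α1 α2 α3 (by omega)
        · simp only [Finset.mem_Ici, not_le, Fin.lt_def] at hr
          exact trafficB_apply_eq_zero_of_lt hm hmono.monotone hr
    _ = 2 * n - 2 * (ι ⟨0, hm⟩ : ℕ) := Fin.card_Ici _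

/-- **Theorem 1(2), first part.** If the vehicle immediately behind the head vehicle
is an HDV (`i₁ ≥ 2`, i.e. `1 ≤ ι 0` in 0-indexed notation), then the mixed-traffic
pair `(A, B)` is not completely controllable: the controllability matrix has rank at
most `2n − 2(i₁ − 1) < 2n`. (Here `(ι ⟨0, hm⟩ : ℕ) = i₁ − 1`.) -/
theorem mixed_traffic_not_controllable_of_first_vehicle_HDV
    (n m : ℕ) (hn : 1 ≤ n) (hm : 1 ≤ m) (hmn : m ≤ n)
    (ι : Fin m → Fin n) (hmono : StrictMono ι)
    (α1 α2 α3 : ℝ) (hα1 : 0 < α1) (hα3 : 0 < α3) (hα23 : α3 < α2)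
    (hfirst : 1 ≤ (ι ⟨0, hm⟩ : ℕ)) :
    (ctrbMat (trafficA n m ι α1 α2 α3) (trafficB n m ι)).rank
        ≤ 2 * n - 2 * (ι ⟨0, hm⟩ : ℕ) ∧
      2 * n - 2 * (ι ⟨0, hm⟩ : ℕ) < 2 * n :=
  mixed_traffic_not_controllable_of_first_vehicle_HDV_general n m hm ι hmono α1 α2 α3 hfirst
end

section
/- Assume the smallest CAV index satisfies i₁ ≥ 2. Then for every natural number k, the first 2(i₁ − 1) rows of the matrix A^k B are identically zero; consequently, the states of the vehicles preceding the first CAV (the components s̃₁, ṽ₁, …, s̃_{i₁−1}, ṽ_{i₁−1}) cannot be influenced by the control input of the CAVs. -/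
open Matrix

/-- If the first CAV is not the first vehicle (`i₁ ≥ 2`, i.e. `1 ≤ ι 0` in 0-indexed
notation), then for every `k ∈ ℕ` the first `2(i₁ − 1)` rows of `A^k B` vanish:
the states of the vehicles preceding the first CAV cannot be influenced by the
control input of the CAVs. (Here `(ι ⟨0, hm⟩ : ℕ) = i₁ − 1`.) -/
theorem powA_mul_B_first_rows_zero
    (n m : ℕ) (hn : 1 ≤ n) (hm : 1 ≤ m) (hmn : m ≤ n)
    (ι : Fin m → Fin n) (hmono : StrictMono ι)
    (α1 α2 α3 : ℝ) (hα1 : 0 < α1) (hα3 : 0 < α3) (hα23 : α3 < α2)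
    (hfirst : 1 ≤ (ι ⟨0, hm⟩ : ℕ)) :
    ∀ (k : ℕ) (r : Fin (2 * n)), (r : ℕ) < 2 * (ι ⟨0, hm⟩ : ℕ) →
      ∀ j : Fin m, ((trafficA n m ι α1 α2 α3) ^ k * trafficB n m ι) r j = 0 := by
  intro k
  induction k with
  | zero =>
    intro r hr j
    have hle : (ι ⟨0, hm⟩ : ℕ) ≤ (ι j : ℕ) := by
      have : (⟨0, hm⟩ : Fin m) ≤ j := Fin.mk_le_of_le_val (Nat.zero_le _)
      exact hmono.monotone this
    rw [pow_zero, Matrix.one_mul]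
    simp only [trafficB, Matrix.of_apply]
    rw [if_neg (by omega)]
  | succ k ih =>
    intro r hr j
    rw [pow_succ', Matrix.mul_assoc, Matrix.mul_apply]
    apply Finset.sum_eq_zero
    intro c _
    by_cases hc : (c : ℕ) / 2 ≤ (r : ℕ) / 2
    · have hc' : (c : ℕ) < 2 * (ι ⟨0, hm⟩ : ℕ) := by omega
      rw [ih c hc' j, mul_zero]
    · have hA : trafficA n m ι α1 α2 α3 r c = 0 := by
        simp only [trafficA, Matrix.of_apply]
        rw [if_neg (by omega), if_neg (by omega)]
      rw [hA, zero_mul]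
end

section
/- Assume the smallest CAV index satisfies i₁ ≥ 2. Then the top-left principal submatrix of A of size 2(i₁ − 1) × 2(i₁ − 1) (the dynamics matrix of the uncontrollable subsystem consisting of the states s̃₁, ṽ₁, …, s̃_{i₁−1}, ṽ_{i₁−1}) has all its complex eigenvalues with strictly negative real part; that is, the uncontrollable subsystem is stable. -/
open Matrix

set_option maxHeartbeats 2000000 in
/-- **Theorem 1(2), stability of the uncontrollable subsystem.** If the first CAV is
not the first vehicle (`i₁ ≥ 2`, i.e. `1 ≤ ι 0` in 0-indexed notation), then every
complex eigenvalue of the top-left `2(i₁−1) × 2(i₁−1)` principal submatrix of `A`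
(the dynamics of the states `s̃₁, ṽ₁, …, s̃_{i₁−1}, ṽ_{i₁−1}`) has strictly negative
real part. (Here `(ι ⟨0, hm⟩ : ℕ) = i₁ − 1`.) -/
theorem uncontrollable_subsystem_stable
    (n m : ℕ) (hn : 1 ≤ n) (hm : 1 ≤ m) (hmn : m ≤ n)
    (ι : Fin m → Fin n) (hmono : StrictMono ι)
    (α1 α2 α3 : ℝ) (hα1 : 0 < α1) (hα3 : 0 < α3) (hα23 : α3 < α2)
    (hfirst : 1 ≤ (ι ⟨0, hm⟩ : ℕ)) :
    ∀ μ : ℂ,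
      μ ∈ spectrum ℂ
        (((trafficA n m ι α1 α2 α3).submatrix
            (Fin.castLE (by have := (ι ⟨0, hm⟩).isLt; omega) :
              Fin (2 * (ι ⟨0, hm⟩ : ℕ)) → Fin (2 * n))
            (Fin.castLE (by have := (ι ⟨0, hm⟩).isLt; omega) :
              Fin (2 * (ι ⟨0, hm⟩ : ℕ)) → Fin (2 * n))).map
          (Complex.ofReal)) →
      μ.re < 0 := by
  classical
  intro μ hμ
  set N := (ι ⟨0, hm⟩ : ℕ) with hNdef
  have hNpos : 1 ≤ N := hfirst
  have hNlt : N < n := (ι ⟨0, hm⟩).isLt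
  set M : Matrix (Fin (2 * N)) (Fin (2 * N)) ℂ :=
    ((trafficA n m ι α1 α2 α3).submatrix
        (Fin.castLE (by omega)) (Fin.castLE (by omega))).map Complex.ofReal with hMdef
  -- entries of M
  have hnotCAV : ∀ j : ℕ, j < N → ¬ ∃ k, (ι k : ℕ) = j := by
    rintro j hj ⟨k, hk⟩
    have h0k : (⟨0, hm⟩ : Fin m) ≤ k := by simp [Fin.le_def]
    have := hmono.monotone h0k
    rw [Fin.le_def] at this
    omega
  have hMentry : ∀ r c : Fin (2 * N),
      M r c = if (r : ℕ) / 2 = (c : ℕ) / 2 then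
          ((matP1 α1 α2 (fin2 (r : ℕ)) (fin2 (c : ℕ)) : ℝ) : ℂ)
        else if (r : ℕ) / 2 = (c : ℕ) / 2 + 1 then
          ((matP2 α3 (fin2 (r : ℕ)) (fin2 (c : ℕ)) : ℝ) : ℂ)
        else 0 := by
    intro r c
    have hr2 : (r : ℕ) / 2 < N := by have := r.isLt; omega
    have hnc := hnotCAV ((r : ℕ) / 2) hr2
    simp only [hMdef, Matrix.map_apply, Matrix.submatrix_apply, trafficA, Matrix.of_apply,
      Fin.coe_castLE, hnc, if_false]
    split_ifs <;> simp
  -- eigenvector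
  rw [spectrum.mem_iff] at hμ
  have hdet : ((algebraMap ℂ (Matrix (Fin (2 * N)) (Fin (2 * N)) ℂ)) μ - M).det = 0 := by
    by_contra h
    exact hμ ((Matrix.isUnit_iff_isUnit_det _).mpr (isUnit_iff_ne_zero.mpr h))
  obtain ⟨v, hv0, hv⟩ := (Matrix.exists_mulVec_eq_zero_iff).mpr hdet
  have hvrow : ∀ r, (∑ c, M r c * v c) = μ * v r := by
    intro r
    have h := congrFun hv r
    rw [Matrix.sub_mulVec] at h
    simp only [Pi.sub_apply, Pi.zero_apply, sub_eq_zero] at h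
    rw [Algebra.algebraMap_eq_smul_one, Matrix.smul_mulVec, Matrix.one_mulVec] at h
    simpa [Matrix.mulVec, dotProduct] using h.symm
  -- first nonzero block
  have hex : ∃ j : ℕ, ∃ c : Fin (2 * N), (c : ℕ) / 2 = j ∧ v c ≠ 0 := by
    by_contra h
    push_neg at h
    apply hv0
    funext c
    exact h ((c : ℕ) / 2) c rfl
  set i0 := Nat.find hex with hi0def
  obtain ⟨c0, hc0, hvc0⟩ := Nat.find_spec hex
  have hc0' : (c0 : ℕ) / 2 = i0 := hc0
  have hmin : ∀ c : Fin (2 * N), (c : ℕ) / 2 < i0 → v c = 0 := by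
    intro c hc
    by_contra h
    exact Nat.find_min hex hc ⟨c, rfl, h⟩
  have hi0 : i0 < N := by have := c0.isLt; omega
  set ra : Fin (2 * N) := ⟨2 * i0, by omega⟩ with hra
  set rb : Fin (2 * N) := ⟨2 * i0 + 1, by omega⟩ with hrb
  have hraval : (ra : ℕ) = 2 * i0 := rfl
  have hrbval : (rb : ℕ) = 2 * i0 + 1 := rfl
  have hab : ra ≠ rb := by
    intro h
    have := congrArg Fin.val h
    rw [hraval, hrbval] at this
    omega
  have hwne : v ra ≠ 0 ∨ v rb ≠ 0 := by
    have hmod := Nat.mod_two_eq_zero_or_one (c0 : ℕ)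
    rcases hmod with h | h
    · left
      have : c0 = ra := by apply Fin.ext; rw [hraval]; omega
      rwa [← this]
    · right
      have : c0 = rb := by apply Fin.ext; rw [hrbval]; omega
      rwa [← this]
  -- row equations
  have hsum : ∀ r : Fin (2 * N), (r : ℕ) / 2 = i0 →
      (∑ c, M r c * v c) = M r ra * v ra + M r rb * v rb := by
    intro r hr
    have hpair : (∑ c ∈ ({ra, rb} : Finset (Fin (2 * N))), M r c * v c)
        = M r ra * v ra + M r rb * v rb := Finset.sum_pair hab
    rw [← hpair]
    apply (Finset.sum_subset (Finset.subset_univ _) _).symm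
    intro c _ hc
    simp only [Finset.mem_insert, Finset.mem_singleton, not_or] at hc
    obtain ⟨h1, h2⟩ := hc
    by_cases hcb : (c : ℕ) / 2 = i0
    · exfalso
      have hcv : (c : ℕ) = 2 * i0 ∨ (c : ℕ) = 2 * i0 + 1 := by omega
      rcases hcv with h | h
      · exact h1 (Fin.ext (by rw [hraval]; omega))
      · exact h2 (Fin.ext (by rw [hrbval]; omega))
    by_cases hcc : (r : ℕ) / 2 = (c : ℕ) / 2 + 1
    · have : v c = 0 := hmin c (by omega)
      rw [this, mul_zero]
    · rw [hMentry]
      rw [if_neg (by omega), if_neg hcc, zero_mul]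
  have f2a : fin2 (2 * i0) = 0 := by
    apply Fin.ext; simp [fin2, Nat.mul_mod_right]
  have f2b : fin2 (2 * i0 + 1) = 1 := by
    apply Fin.ext; simp [fin2, Nat.add_mod, Nat.mul_mod_right]
  have hMaa : M ra ra = 0 := by
    rw [hMentry, hraval, if_pos rfl, f2a]
    norm_num [matP1]
  have hMab : M ra rb = -1 := by
    rw [hMentry, hraval, hrbval, if_pos (by omega : 2 * i0 / 2 = (2 * i0 + 1) / 2), f2a, f2b]
    norm_num [matP1]
  have hMba : M rb ra = (α1 : ℂ) := by
    rw [hMentry, hraval, hrbval, if_pos (by omega : (2 * i0 + 1) / 2 = 2 * i0 / 2), f2b, f2a]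
    norm_num [matP1]
  have hMbb : M rb rb = -(α2 : ℂ) := by
    rw [hMentry, hrbval, if_pos rfl, f2b]
    norm_num [matP1]
  have hra2 : (ra : ℕ) / 2 = i0 := by rw [hraval]; omega
  have hrb2 : (rb : ℕ) / 2 = i0 := by rw [hrbval]; omega
  have eqa : M ra ra * v ra + M ra rb * v rb = μ * v ra := by
    rw [← hsum ra hra2]; exact hvrow ra
  have eqb : M rb ra * v ra + M rb rb * v rb = μ * v rb := by
    rw [← hsum rb hrb2]; exact hvrow rb
  rw [hMaa, hMab] at eqa
  rw [hMba, hMbb] at eqb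
  -- eigenvalue equation for P1
  have hwa : v ra ≠ 0 := by
    intro h
    rw [h, mul_zero] at eqa
    have hb0 : v rb = 0 := by linear_combination -eqa
    rcases hwne with h' | h'
    · exact h' h
    · exact h' hb0
  have hvb : v rb = -(μ * v ra) := by linear_combination -eqa
  have hpoly : μ ^ 2 + (α2 : ℂ) * μ + (α1 : ℂ) = 0 := by
    have h : (μ ^ 2 + (α2 : ℂ) * μ + (α1 : ℂ)) * v ra = 0 := by
      rw [hvb] at eqb
      linear_combination eqb
    rcases mul_eq_zero.mp h with h | h
    · exact h
    · exact absurd h hwa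
  -- conclude
  by_contra hxn
  push_neg at hxn
  have h1 := congrArg Complex.re hpoly
  have h2 := congrArg Complex.im hpoly
  simp only [pow_two, Complex.add_re, Complex.mul_re, Complex.add_im, Complex.mul_im,
    Complex.ofReal_re, Complex.ofReal_im, Complex.zero_re, Complex.zero_im] at h1 h2
  have h3 : (2 * μ.re + α2) * (μ.im * μ.im) = 0 := by nlinarith [h2, mul_self_nonneg μ.im]
  have hpos : 0 < 2 * μ.re + α2 := by linarith
  have hy2 : μ.im * μ.im = 0 := by
    rcases mul_eq_zero.mp h3 with h | h
    · linarith
    · exact h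
  have hy0 : μ.im = 0 := by nlinarith [mul_self_nonneg μ.im]
  rw [hy0] at h1
  nlinarith [mul_self_nonneg μ.re]
end

section
/- Assume the smallest CAV index satisfies i₁ ≥ 2 and that α₁ − α₂α₃ + α₃² ≠ 0. Let p = n − i₁ + 1, let A₂₂ ∈ ℝ^{2p×2p} be the bottom-right principal submatrix of A consisting of rows and columns 2(i₁−1)+1 through 2n, and let B₂ ∈ ℝ^{2p×m} consist of the corresponding rows of B. Then the pair (A₂₂, B₂) is controllable, i.e. the controllability matrix [B₂, A₂₂B₂, …, A₂₂^{2p−1}B₂] has rank 2p; that is, the subsystem consisting of the states s̃_{i₁}, ṽ_{i₁}, …, s̃_n, ṽ_n is controllable. -/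
open Matrix

/-!
By the Popov–Belevitch–Hautus test it suffices to show that a complex left eigenvector `v` of
`A₂₂` with `v B₂ = 0` vanishes. Write `(a j, b j)` for the spacing and velocity components of `v`
at the `j`-th vehicle of the platoon. The eigen-equations say `μ a j = α₁ b j`,
`μ b j = -a j - α₂ b j + a (j+1) + α₃ b (j+1)` (with the `α`-terms of CAVs dropped), and `b j = 0`
at every CAV. If `μ² + α₂ μ + α₁ ≠ 0`, a downward induction from the last vehicle kills every
component. Otherwise `μ ≠ 0`, and for every HDV `j` the equation of vehicle `j - 1` gives
`a j + α₃ b j = 0` (vehicle `0` of the platoon is a CAV); with the spacing equation of `j` this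
forces `b j = 0` unless `μ = α₃ - α₂`, which `α₁ - α₂ α₃ + α₃² ≠ 0` excludes.
-/

open Polynomial in
theorem Matrix.vecMul_pow_mul_eq_zero_of_forall_lt {K n p : Type*} [Field K] [Fintype n]
    [DecidableEq n] (A : Matrix n n K) (B : Matrix n p K) (w : n → K)
    (h : ∀ k < Fintype.card n, w ᵥ* (A ^ k * B) = 0) (k : ℕ) : w ᵥ* (A ^ k * B) = 0 := by
  rw [pow_eq_aeval_mod_charpoly, aeval_eq_sum_range, Matrix.sum_mul, vecMul_sum]
  refine Finset.sum_eq_zero fun i _ ↦ ?_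
  rw [smul_mul, vecMul_smul]
  rcases lt_or_ge i (Fintype.card n) with hi | hi
  · rw [h i hi, smul_zero]
  · rw [coeff_eq_zero_of_degree_lt, zero_smul]
    calc degree (X ^ k %ₘ A.charpoly) < degree A.charpoly :=
          degree_modByMonic_lt _ A.charpoly_monic
      _ = Fintype.card n := A.charpoly_degree_eq_dim
      _ ≤ i := by exact_mod_cast hi

theorem Matrix.exists_left_eigenvector_mem {K n : Type*} [Field K] [IsAlgClosed K] [Fintype n]
    (A : Matrix n n K) (W : Submodule K (n → K)) (hW : W ≠ ⊥) (hA : ∀ u ∈ W, u ᵥ* A ∈ W) :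
    ∃ μ : K, ∃ v ∈ W, v ≠ 0 ∧ v ᵥ* A = μ • v := by
  have : Nontrivial W := Submodule.nontrivial_iff_ne_bot.mpr hW
  let f : Module.End K W := A.vecMulLinear.restrict hA
  obtain ⟨μ, hμ⟩ := f.exists_eigenvalue
  obtain ⟨v, hv⟩ := hμ.exists_hasEigenvector
  exact ⟨μ, v, v.2, by simpa using hv.2, congrArg Subtype.val hv.apply_eq_smul⟩

theorem ctrbMat_rank_eq_of_hautus {N p : ℕ} (A : Matrix (Fin N) (Fin N) ℝ)
    (B : Matrix (Fin N) (Fin p) ℝ)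
    (h : ∀ (μ : ℂ) (v : Fin N → ℂ),
      v ᵥ* A.map (↑) = μ • v → v ᵥ* B.map (↑) = 0 → v = 0) :
    (ctrbMat A B).rank = N := by
  set Ac := A.map ((↑) : ℝ → ℂ)
  set Bc := B.map ((↑) : ℝ → ℂ)
  let W : Submodule ℂ (Fin N → ℂ) :=
    LinearMap.ker (LinearMap.pi fun k : ℕ ↦ (Ac ^ k * Bc).vecMulLinear)
  have mem_W : ∀ u, u ∈ W ↔ ∀ k, u ᵥ* (Ac ^ k * Bc) = 0 := by
    simp [W, funext_iff]
  have hW : W = ⊥ := by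
    by_contra hW
    obtain ⟨μ, v, hvW, hv0, hμ⟩ := Ac.exists_left_eigenvector_mem W hW fun u hu ↦
      (mem_W _).2 fun k ↦ by
        rw [vecMul_vecMul, ← Matrix.mul_assoc, ← pow_succ']
        exact (mem_W u).1 hu (k + 1)
    exact hv0 (h μ v hμ (by simpa using (mem_W v).1 hvW 0))
  suffices hinj : Function.Injective (ctrbMat A B).vecMul by
    simpa using (vecMul_injective_iff.mp hinj).rank_matrix
  refine (injective_iff_map_eq_zero (ctrbMat A B).vecMulLinear).2 fun w hw ↦ ?_
  have hwc : (fun r ↦ (w r : ℂ)) ∈ W := by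
    refine (mem_W _).2 (Ac.vecMul_pow_mul_eq_zero_of_forall_lt Bc _ fun k hk ↦ ?_)
    have hAk : Ac ^ k * Bc = (A ^ k * B).map Complex.ofRealHom := by
      rw [Matrix.map_mul, Matrix.map_pow]; rfl
    ext i
    have := congrArg Complex.ofRealHom (congrFun hw (⟨k, by simpa using hk⟩, i))
    rw [hAk]
    simpa [ctrbMat, vecMul, dotProduct] using this
  rw [hW, Submodule.mem_bot] at hwc
  ext r
  simpa using congrFun hwc r

/-- The equations satisfied by the spacing components `a j` and velocity components `b j` of a
left eigenvector, with eigenvalue `μ` and annihilated by the input matrix, of a platoon of `q`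
vehicles whose CAVs are those `j` with `cav j`. -/
structure PlatoonEigenRecurrence {K : Type*} [Field K] (cav : ℕ → Prop) [DecidablePred cav]
    (α1 α2 α3 μ : K) (q : ℕ) (a b : ℕ → K) : Prop where
  spacing : ∀ j < q, μ * a j = (if cav j then 0 else α1) * b j
  velocity : ∀ j < q, μ * b j = -a j + (if cav j then 0 else -α2) * b j + a (j + 1)
    + (if cav (j + 1) then 0 else α3) * b (j + 1)
  input : ∀ j < q, cav j → b j = 0

namespace PlatoonEigenRecurrence

variable {K : Type*} [Field K] {cav : ℕ → Prop} [DecidablePred cav] {α1 α2 α3 μ : K} {q : ℕ}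
  {a b : ℕ → K}

theorem eq_zero_of_quadratic_ne_zero (h : PlatoonEigenRecurrence cav α1 α2 α3 μ q a b)
    (haq : a q = 0) (hbq : b q = 0) (hμ : μ ^ 2 + α2 * μ + α1 ≠ 0) {j : ℕ} (hj : j ≤ q) :
    a j = 0 ∧ b j = 0 := by
  induction hj using Nat.decreasingInduction with
  | self => exact ⟨haq, hbq⟩
  | of_succ j hj ih =>
    have hS := h.spacing j hj
    have hV := h.velocity j hj
    rw [ih.1, ih.2] at hV
    have hbj : b j = 0 := by
      by_cases hc : cav j
      · exact h.input j hj hc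
      · rw [if_neg hc] at hS hV
        have : (μ ^ 2 + α2 * μ + α1) * b j = 0 := by linear_combination μ * hV - hS
        exact (mul_eq_zero.mp this).resolve_left hμ
    rw [hbj] at hV
    exact ⟨by linear_combination hV, hbj⟩

theorem eq_zero_of_quadratic_eq_zero (h : PlatoonEigenRecurrence cav α1 α2 α3 μ q a b)
    (hcav : cav 0) (hμ0 : μ ≠ 0) (hμ : μ ^ 2 + α2 * μ + α1 = 0)
    (hcond : α1 - α2 * α3 + α3 ^ 2 ≠ 0) {j : ℕ} (hj : j < q) :
    a j = 0 ∧ b j = 0 := by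
  have of_cav : ∀ j < q, cav j → a j = 0 ∧ b j = 0 := fun j hj hc ↦ by
    have hS := h.spacing j hj
    rw [if_pos hc, zero_mul] at hS
    exact ⟨(mul_eq_zero.mp hS).resolve_left hμ0, h.input j hj hc⟩
  by_cases hc : cav j
  · exact of_cav j hj hc
  obtain ⟨i, rfl⟩ : ∃ i, j = i + 1 := Nat.exists_eq_succ_of_ne_zero (by rintro rfl; exact hc hcav)
  have hS := h.spacing (i + 1) hj
  rw [if_neg hc] at hS
  have hkey : a (i + 1) + α3 * b (i + 1) = 0 := by
    have hV := h.velocity i (by omega)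
    rw [if_neg hc] at hV
    by_cases hc' : cav i
    · obtain ⟨ha, hb⟩ := of_cav i (by omega) hc'
      rw [ha, hb] at hV
      linear_combination -hV
    · have hS' := h.spacing i (by omega)
      rw [if_neg hc'] at hS' hV
      have : μ * (a (i + 1) + α3 * b (i + 1)) = 0 := by
        linear_combination -μ * hV + hS' + b i * hμ
      exact (mul_eq_zero.mp this).resolve_left hμ0
  have hb : b (i + 1) = 0 := by
    have : (α1 + α3 * μ) * b (i + 1) = 0 := by linear_combination -hS + μ * hkey
    refine (mul_eq_zero.mp this).resolve_left fun hroot ↦ hcond ?_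
    have : μ * (μ + α2 - α3) = 0 := by linear_combination hμ - hroot
    have hμ' : μ = α3 - α2 := by linear_combination (mul_eq_zero.mp this).resolve_left hμ0
    linear_combination hroot - α3 * hμ'
  exact ⟨by linear_combination hkey - α3 * hb, hb⟩

theorem eq_zero (h : PlatoonEigenRecurrence cav α1 α2 α3 μ q a b) (hcav : cav 0)
    (haq : a q = 0) (hbq : b q = 0) (hα1 : α1 ≠ 0) (hcond : α1 - α2 * α3 + α3 ^ 2 ≠ 0)
    {j : ℕ} (hj : j < q) : a j = 0 ∧ b j = 0 := by
  by_cases hμ : μ ^ 2 + α2 * μ + α1 = 0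
  · refine h.eq_zero_of_quadratic_eq_zero hcav (fun hμ0 ↦ hα1 ?_) hμ hcond hj
    simpa [hμ0] using hμ
  · exact h.eq_zero_of_quadratic_ne_zero haq hbq hμ hj.le

end PlatoonEigenRecurrence

def blockBidiagEntry {R : Type*} [Zero R] (D L : ℕ → Matrix (Fin 2) (Fin 2) R) (r c : ℕ) : R :=
  if r / 2 = c / 2 then D (r / 2) (fin2 r) (fin2 c)
  else if r / 2 = c / 2 + 1 then L (r / 2) (fin2 r) (fin2 c) else 0

section BlockBidiag

variable {R : Type*}

theorem blockBidiagEntry_two_mul_add [Zero R] (D L : ℕ → Matrix (Fin 2) (Fin 2) R) (i r c : ℕ) :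
    blockBidiagEntry D L (2 * i + r) (2 * i + c)
      = blockBidiagEntry (fun j ↦ D (i + j)) (fun j ↦ L (i + j)) r c := by
  have hr : (2 * i + r) / 2 = i + r / 2 := by omega
  have hc : (2 * i + c) / 2 = i + c / 2 := by omega
  have hf : ∀ s, fin2 (2 * i + s) = fin2 s := fun s ↦ by ext; simp [fin2]
  simp only [blockBidiagEntry, hr, hc, hf]
  congr 1 <;> simp [add_assoc]

theorem blockBidiagEntry_eq_zero [Zero R] (D L : ℕ → Matrix (Fin 2) (Fin 2) R) {r c : ℕ}
    (hr : r ∉ Finset.Ico (2 * (c / 2)) (2 * (c / 2) + 4)) : blockBidiagEntry D L r c = 0 := by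
  simp only [Finset.mem_Ico, not_and_or, not_le, not_lt] at hr
  rw [blockBidiagEntry, if_neg (by omega), if_neg (by omega)]

theorem vecMul_of_blockBidiagEntry [NonUnitalNonAssocSemiring R]
    (D L : ℕ → Matrix (Fin 2) (Fin 2) R) {N : ℕ} (w : ℕ → R) (hw : ∀ r, N ≤ r → w r = 0)
    (j : ℕ) (l : Fin 2) (h : 2 * j + l < N) :
    ((fun r : Fin N ↦ w r) ᵥ* of fun r c : Fin N ↦ blockBidiagEntry D L r c) ⟨2 * j + l, h⟩ =
      w (2 * j) * D j 0 l + w (2 * j + 1) * D j 1 l + w (2 * j + 2) * L (j + 1) 0 l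
        + w (2 * j + 3) * L (j + 1) 1 l := by
  let g r := w r * blockBidiagEntry D L r (2 * j + l)
  have hc : (2 * j + (l : ℕ)) / 2 = j := by omega
  calc _ = ∑ r ∈ Finset.range N, g r := by
        rw [← Fin.sum_univ_eq_sum_range]
        rfl
    _ = ∑ r ∈ Finset.range N ∪ Finset.Ico (2 * j) (2 * j + 4), g r := by
        refine Finset.sum_subset Finset.subset_union_left fun r _ hr ↦ ?_
        simp [g, hw r (by simpa using hr)]
    _ = ∑ r ∈ Finset.Ico (2 * j) (2 * j + 4), g r := by
        refine (Finset.sum_subset Finset.subset_union_right fun r _ hr ↦ ?_).symm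
        simp [g, blockBidiagEntry_eq_zero D L (hc ▸ hr)]
    _ = _ := by
        rw [Finset.sum_Ico_eq_sum_range, show 2 * j + 4 - 2 * j = 4 by omega]
        simp only [g, Finset.sum_range_succ, Finset.sum_range_zero, zero_add, add_zero,
          blockBidiagEntry_two_mul_add]
        fin_cases l <;> simp [blockBidiagEntry, fin2]

theorem map_blockBidiagEntry {S : Type*} [Zero R] [Zero S] {φ : R → S} (hφ : φ 0 = 0)
    (D L : ℕ → Matrix (Fin 2) (Fin 2) R) (r c : ℕ) :
    φ (blockBidiagEntry D L r c)
      = blockBidiagEntry (fun j ↦ (D j).map φ) (fun j ↦ (L j).map φ) r c := by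
  unfold blockBidiagEntry
  split_ifs <;> simp [hφ]

end BlockBidiag

noncomputable def trafficDiagBlock {n m : ℕ} (ι : Fin m → Fin n) (α1 α2 : ℝ) (j : ℕ) :
    Matrix (Fin 2) (Fin 2) ℝ :=
  if ∃ k, (ι k : ℕ) = j then matS1 else matP1 α1 α2

noncomputable def trafficSubdiagBlock {n m : ℕ} (ι : Fin m → Fin n) (α3 : ℝ) (j : ℕ) :
    Matrix (Fin 2) (Fin 2) ℝ :=
  if ∃ k, (ι k : ℕ) = j then matS2 else matP2 α3

section Traffic

variable {n m : ℕ} (ι : Fin m → Fin n) (α1 α2 α3 : ℝ)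

theorem trafficA_apply (r c : Fin (2 * n)) :
    trafficA n m ι α1 α2 α3 r c
      = blockBidiagEntry (trafficDiagBlock ι α1 α2) (trafficSubdiagBlock ι α3) r c := by
  simp only [trafficA, of_apply, blockBidiagEntry, trafficDiagBlock, trafficSubdiagBlock]
  split_ifs <;> rfl

theorem trafficA_submatrix_map {S : Type*} [Zero S] {φ : ℝ → S} (hφ : φ 0 = 0) {q i0 : ℕ}
    (f : Fin (2 * q) → Fin (2 * n)) (hf : ∀ r, (f r : ℕ) = 2 * i0 + r) :
    ((trafficA n m ι α1 α2 α3).submatrix f f).map φ = of fun r c : Fin (2 * q) ↦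
      blockBidiagEntry (fun j ↦ (trafficDiagBlock ι α1 α2 (i0 + j)).map φ)
        (fun j ↦ (trafficSubdiagBlock ι α3 (i0 + j)).map φ) r c := by
  ext r c
  simp only [map_apply, submatrix_apply, of_apply, trafficA_apply, hf,
    blockBidiagEntry_two_mul_add, map_blockBidiagEntry hφ]

end Traffic

theorem PlatoonEigenRecurrence.of_vecMul_trafficA {n m q i0 : ℕ} (ι : Fin m → Fin n)
    {α1 α2 α3 : ℝ} (f : Fin (2 * q) → Fin (2 * n)) (hf : ∀ r, (f r : ℕ) = 2 * i0 + r) {μ : ℂ}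
    (w : ℕ → ℂ) (hw : ∀ r, 2 * q ≤ r → w r = 0)
    (hμ : (fun r : Fin (2 * q) ↦ w r) ᵥ* ((trafficA n m ι α1 α2 α3).submatrix f f).map (↑)
      = μ • fun r : Fin (2 * q) ↦ w r)
    (hB : (fun r : Fin (2 * q) ↦ w r) ᵥ* ((trafficB n m ι).submatrix f id).map (↑) = 0) :
    PlatoonEigenRecurrence (fun j ↦ ∃ k, (ι k : ℕ) = i0 + j) (α1 : ℂ) α2 α3 μ q
      (fun j ↦ w (2 * j)) (fun j ↦ w (2 * j + 1)) := by
  rw [trafficA_submatrix_map ι α1 α2 α3 Complex.ofReal_zero f hf] at hμ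
  have column : ∀ j < q, ∀ l : Fin 2, μ * w (2 * j + l)
      = w (2 * j) * (trafficDiagBlock ι α1 α2 (i0 + j) 0 l : ℂ)
        + w (2 * j + 1) * (trafficDiagBlock ι α1 α2 (i0 + j) 1 l : ℂ)
        + w (2 * j + 2) * (trafficSubdiagBlock ι α3 (i0 + (j + 1)) 0 l : ℂ)
        + w (2 * j + 3) * (trafficSubdiagBlock ι α3 (i0 + (j + 1)) 1 l : ℂ) := fun j hj l ↦ by
    have := congrFun hμ ⟨2 * j + l, by omega⟩
    rw [vecMul_of_blockBidiagEntry _ _ w hw] at this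
    exact this.symm
  refine ⟨fun j hj ↦ ?_, fun j hj ↦ ?_, fun j hj ⟨k, hk⟩ ↦ ?_⟩
  · have := column j hj 0
    simp only [trafficDiagBlock, trafficSubdiagBlock] at this
    split_ifs at this ⊢ <;> simp only [matS1, matP1, matS2, matP2, of_apply, cons_val',
      cons_val_zero, cons_val_one, empty_val', cons_val_fin_one, Complex.ofReal_zero] at this <;>
      linear_combination this
  · have := column j hj 1
    simp only [trafficDiagBlock, trafficSubdiagBlock] at this
    split_ifs at this ⊢ <;> simp only [matS1, matP1, matS2, matP2, of_apply, cons_val',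
      cons_val_zero, cons_val_one, empty_val', cons_val_fin_one, Complex.ofReal_zero,
      Complex.ofReal_one, Complex.ofReal_neg] at this <;>
      linear_combination this
  · have := congrFun hB k
    simp only [vecMul, dotProduct, trafficB, map_apply, submatrix_apply, id_eq, of_apply, hf, hk,
      Pi.zero_apply] at this
    rw [Fintype.sum_eq_single ⟨2 * j + 1, by omega⟩ fun r hr ↦ by
      rw [if_neg fun h ↦ hr (Fin.ext (by simp; omega))]; simp] at this
    rwa [if_pos (by ring), Complex.ofReal_one, mul_one] at this

theorem trafficA_submatrix_left_eigenvector_eq_zero {n m q i0 : ℕ} (ι : Fin m → Fin n)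
    {α1 α2 α3 : ℝ} (hα1 : α1 ≠ 0) (hcond : α1 - α2 * α3 + α3 ^ 2 ≠ 0)
    (hcav : ∃ k, (ι k : ℕ) = i0) (f : Fin (2 * q) → Fin (2 * n))
    (hf : ∀ r, (f r : ℕ) = 2 * i0 + r) {μ : ℂ} {v : Fin (2 * q) → ℂ}
    (hμ : v ᵥ* ((trafficA n m ι α1 α2 α3).submatrix f f).map (↑) = μ • v)
    (hB : v ᵥ* ((trafficB n m ι).submatrix f id).map (↑) = 0) : v = 0 := by
  set w : ℕ → ℂ := Function.extend Fin.val v 0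
  have hwv : (fun r : Fin (2 * q) ↦ w r) = v := funext (Fin.val_injective.extend_apply v 0)
  have hw : ∀ r, 2 * q ≤ r → w r = 0 := fun r hr ↦
    Function.extend_apply' _ _ _ (by rintro ⟨s, rfl⟩; omega)
  rw [← hwv] at hμ hB ⊢
  have hrec := PlatoonEigenRecurrence.of_vecMul_trafficA ι f hf w hw hμ hB
  have hzero := fun j ↦ hrec.eq_zero (by simpa using hcav) (hw _ le_rfl) (hw _ (by omega))
    (by exact_mod_cast hα1) (by exact_mod_cast hcond) (j := j)
  ext r
  obtain ⟨j, hr | hr⟩ := Nat.even_or_odd' (r : ℕ)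
  · simpa [hr] using (hzero j (by omega)).1
  · simpa [hr] using (hzero j (by omega)).2

/-- **Theorem 1(2), controllability of the remaining subsystem.** Suppose the first
CAV is not the first vehicle (`i₁ ≥ 2`, i.e. `1 ≤ ι 0` in 0-indexed notation) and
`α₁ − α₂α₃ + α₃² ≠ 0`. With `p = n − i₁ + 1`, the pair `(A₂₂, B₂)` formed from the
last `2p` rows/columns of `A` and the last `2p` rows of `B` is controllable: its
controllability matrix has rank `2p`. (Here `(ι ⟨0, hm⟩ : ℕ) = i₁ − 1`, so
`p = n − (ι ⟨0, hm⟩ : ℕ)` and the retained state indices are `2(i₁−1), …, 2n−1`.) -/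
theorem controllable_subsystem_behind_first_CAV
    (n m : ℕ) (hm : 1 ≤ m)
    (ι : Fin m → Fin n)
    (α1 α2 α3 : ℝ) (hα1 : 0 < α1)
    (hcond : α1 - α2 * α3 + α3 ^ 2 ≠ 0) :
    (ctrbMat
        ((trafficA n m ι α1 α2 α3).submatrix
          (fun r : Fin (2 * (n - (ι ⟨0, hm⟩ : ℕ))) =>
            (⟨2 * (ι ⟨0, hm⟩ : ℕ) + (r : ℕ),
              by have := r.isLt; have := (ι ⟨0, hm⟩).isLt; omega⟩ : Fin (2 * n)))
          (fun c : Fin (2 * (n - (ι ⟨0, hm⟩ : ℕ))) =>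
            (⟨2 * (ι ⟨0, hm⟩ : ℕ) + (c : ℕ),
              by have := c.isLt; have := (ι ⟨0, hm⟩).isLt; omega⟩ : Fin (2 * n))))
        ((trafficB n m ι).submatrix
          (fun r : Fin (2 * (n - (ι ⟨0, hm⟩ : ℕ))) =>
            (⟨2 * (ι ⟨0, hm⟩ : ℕ) + (r : ℕ),
              by have := r.isLt; have := (ι ⟨0, hm⟩).isLt; omega⟩ : Fin (2 * n)))
          id)).rank = 2 * (n - (ι ⟨0, hm⟩ : ℕ)) :=
  ctrbMat_rank_eq_of_hautus _ _ fun _ _ hμ hB ↦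
    trafficA_submatrix_left_eigenvector_eq_zero ι hα1.ne' hcond ⟨⟨0, hm⟩, rfl⟩ _ (fun _ ↦ rfl)
      hμ hB
end

section
/- Assume α₁ − α₂α₃ + α₃² ≠ 0. Then the pair (A, B) of the mixed-traffic system is stabilizable: for every complex number λ with Re(λ) ≥ 0, the complex matrix [A − λI, B] ∈ ℂ^{2n×(2n+m)} (with A and B regarded as complex matrices) has rank 2n. -/
/-!
Let `v` be a left null vector of `[A − λI, B]` with `Re λ ≥ 0`. Since `A` is block lower
bidiagonal (one `2 × 2` block per vehicle), `v` can be shown to vanish block by block from the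
last vehicle upwards: once `v` vanishes on the blocks after vehicle `i`, the columns of block `i`
only see the diagonal block `D`, so the restriction `w` of `v` to block `i` satisfies
`w (D − λI) = 0`. For a CAV, `v B = 0` gives `w₁ = 0` and then `D = S₁` forces `w₀ = 0`. For an
HDV, `det (P₁ − λI) = λ² + α₂λ + α₁`, whose roots have negative real part as `α₁, α₂ > 0`.
-/

open Matrix

theorem Matrix.rank_eq_card_of_vecMul_eq_zero {K m n : Type*} [Field K] [Fintype m] [Fintype n]
    {M : Matrix m n K} (h : ∀ v, v ᵥ* M = 0 → v = 0) : M.rank = Fintype.card m :=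
  LinearIndependent.rank_matrix <| Matrix.vecMul_injective_iff.mp <|
    (injective_iff_map_eq_zero M.vecMulLinear).mpr h

theorem Complex.sq_add_mul_add_ne_zero_of_re_nonneg {b c : ℝ} (hb : 0 < b) (hc : 0 < c)
    {z : ℂ} (hz : 0 ≤ z.re) : z ^ 2 + b * z + c ≠ 0 := by
  intro h
  have him : z.im * (2 * z.re + b) = 0 := by
    have := congrArg Complex.im h
    simp only [pow_two, add_im, mul_im, ofReal_re, ofReal_im, zero_mul, add_zero, zero_im] at this
    linear_combination this
  have hre := congrArg Complex.re h
  simp only [pow_two, add_re, mul_re, ofReal_re, ofReal_im, zero_mul, sub_zero, zero_re] at hre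
  have hzim : z.im = 0 := (mul_eq_zero.1 him).resolve_right (by linarith)
  rw [hzim] at hre
  nlinarith

-- Row `2i + a` of the state: the spacing (`a = 0`) or velocity (`a = 1`) error of vehicle `i`.
def blockIdx {n : ℕ} (i : Fin n) (a : Fin 2) : Fin (2 * n) := ⟨2 * i + a, by omega⟩

section BlockIdx

variable {n : ℕ}

@[simp] lemma blockIdx_div_two (i : Fin n) (a : Fin 2) : (blockIdx i a : ℕ) / 2 = i := by
  simp only [blockIdx]; omega

@[simp] lemma fin2_blockIdx (i : Fin n) (a : Fin 2) : fin2 (blockIdx i a) = a := by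
  ext; simp only [fin2, blockIdx]; omega

lemma blockIdx_injective (i : Fin n) : Function.Injective (blockIdx i) := fun a b h => by
  simpa using congrArg (fun r : Fin (2 * n) => fin2 r) h

lemma blockIdx_div_two_fin2 (r : Fin (2 * n)) :
    blockIdx ⟨(r : ℕ) / 2, by omega⟩ (fin2 r) = r := by
  ext; simp only [blockIdx, fin2]; omega

theorem eq_zero_of_forall_blockIdx {R : Type*} [Zero R] {v : Fin (2 * n) → R}
    (step : ∀ i : Fin n, (∀ r : Fin (2 * n), 2 * (i : ℕ) + 2 ≤ r → v r = 0) →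
      ∀ a, v (blockIdx i a) = 0) :
    v = 0 := by
  have : ∀ k : ℕ, ∀ r : Fin (2 * n), 2 * n ≤ r + 2 * k → v r = 0 := by
    intro k
    induction k with
    | zero => intro r hr; omega
    | succ k ih =>
      intro r hr
      rw [← blockIdx_div_two_fin2 r]
      exact step _ (fun r' hr' => ih r' (by simp only at hr'; omega)) _
  exact funext fun r => this n r (by omega)

theorem vecMul_comp_blockIdx {R : Type*} [NonUnitalNonAssocSemiring R]
    {M : Matrix (Fin (2 * n)) (Fin (2 * n)) R}
    (hM : M.BlockTriangular fun r => OrderDual.toDual ((r : ℕ) / 2))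
    {v : Fin (2 * n) → R} {i : Fin n} (hv : ∀ r : Fin (2 * n), 2 * (i : ℕ) + 2 ≤ r → v r = 0) :
    (v ᵥ* M) ∘ blockIdx i = (v ∘ blockIdx i) ᵥ* M.submatrix (blockIdx i) (blockIdx i) := by
  funext b
  -- Earlier blocks are killed by `hM`, later ones by `hv`.
  refine (Fintype.sum_of_injective _ (blockIdx_injective i) _ _ (fun r hr => ?_) fun a => rfl).symm
  have hri : (r : ℕ) / 2 ≠ i := fun h => hr ⟨fin2 r, by
    rw [show i = ⟨(r : ℕ) / 2, by omega⟩ from Fin.ext h.symm]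
    exact blockIdx_div_two_fin2 r⟩
  rcases lt_or_gt_of_ne hri with hlt | hgt
  · change v r * M r (blockIdx i b) = 0
    rw [hM (OrderDual.toDual_lt_toDual.mpr (by rwa [blockIdx_div_two])), mul_zero]
  · rw [hv r (by omega), zero_mul]

end BlockIdx

section Traffic

variable {n m : ℕ} (ι : Fin m → Fin n) (α1 α2 α3 : ℝ)

theorem trafficA_blockTriangular :
    (trafficA n m ι α1 α2 α3).BlockTriangular fun r => OrderDual.toDual ((r : ℕ) / 2) := by
  intro r c hrc
  have hrc : (r : ℕ) / 2 < (c : ℕ) / 2 := OrderDual.toDual_lt_toDual.mp hrc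
  simp [trafficA, hrc.ne, show (r : ℕ) / 2 ≠ (c : ℕ) / 2 + 1 by omega]

theorem trafficA_map_sub_smul_blockTriangular (lam : ℂ) :
    ((trafficA n m ι α1 α2 α3).map Complex.ofReal - lam • 1).BlockTriangular
      fun r => OrderDual.toDual ((r : ℕ) / 2) :=
  ((trafficA_blockTriangular ι α1 α2 α3).map Complex.ofRealHom).sub
    (smul_one_eq_diagonal (m := Fin (2 * n)) lam ▸ blockTriangular_diagonal _)

theorem trafficA_submatrix_blockIdx (i : Fin n) :
    (trafficA n m ι α1 α2 α3).submatrix (blockIdx i) (blockIdx i) =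
      if ∃ k, ι k = i then matS1 else matP1 α1 α2 := by
  ext a b
  simp only [submatrix_apply, trafficA, of_apply, blockIdx_div_two, fin2_blockIdx, if_true,
    Fin.val_inj]
  split_ifs <;> rfl

theorem trafficA_map_sub_smul_submatrix_blockIdx (lam : ℂ) (i : Fin n) :
    ((trafficA n m ι α1 α2 α3).map Complex.ofReal - lam • 1).submatrix (blockIdx i) (blockIdx i) =
      (if ∃ k, ι k = i then matS1 else matP1 α1 α2).map Complex.ofReal - lam • 1 := by
  rw [← trafficA_submatrix_blockIdx ι α1 α2 α3 i]
  ext a b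
  simp [Matrix.one_apply, (blockIdx_injective i).eq_iff]

theorem vecMul_trafficB_map (v : Fin (2 * n) → ℂ) (k : Fin m) :
    (v ᵥ* (trafficB n m ι).map Complex.ofReal) k = v (blockIdx (ι k) 1) := by
  refine (Fintype.sum_eq_single (blockIdx (ι k) 1) fun r hr => ?_).trans
    (by simp [trafficB, blockIdx])
  have : (r : ℕ) ≠ 2 * (ι k : ℕ) + 1 := fun h => hr (Fin.ext h)
  simp [trafficB, this]

end Traffic

theorem det_matP1_map_sub_smul (α1 α2 : ℝ) (lam : ℂ) :
    ((matP1 α1 α2).map Complex.ofReal - lam • 1).det = lam ^ 2 + α2 * lam + α1 := by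
  have : (matP1 α1 α2).map Complex.ofReal - lam • 1 = !![-lam, -1; (α1 : ℂ), -α2 - lam] := by
    ext i j; fin_cases i <;> fin_cases j <;> simp [matP1]
  rw [this, det_fin_two_of]
  ring

section Blocks

variable {α1 α2 : ℝ} {lam : ℂ}

theorem eq_zero_of_vecMul_matP1_map_sub_smul (hα1 : 0 < α1) (hα2 : 0 < α2) (hlam : 0 ≤ lam.re)
    {w : Fin 2 → ℂ} (hw : w ᵥ* ((matP1 α1 α2).map Complex.ofReal - lam • 1) = 0) : w = 0 :=
  eq_zero_of_vecMul_eq_zero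
    (det_matP1_map_sub_smul α1 α2 lam ▸
      Complex.sq_add_mul_add_ne_zero_of_re_nonneg hα2 hα1 hlam) hw

theorem eq_zero_of_vecMul_matS1_map_sub_smul {w : Fin 2 → ℂ} (hw1 : w 1 = 0)
    (hw : w ᵥ* (matS1.map Complex.ofReal - lam • 1) = 0) : w = 0 := by
  have hw0 : w 0 = 0 := by
    simpa [vecMul, dotProduct, Fin.sum_univ_two, matS1, hw1] using congrFun hw 1
  ext a
  fin_cases a
  exacts [hw0, hw1]

end Blocks

theorem mixed_traffic_stabilizable_general
    (n m : ℕ)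
    (ι : Fin m → Fin n)
    (α1 α2 α3 : ℝ) (hα1 : 0 < α1) (hα3 : 0 < α3) (hα23 : α3 < α2) :
    ∀ lam : ℂ, 0 ≤ lam.re →
      (Matrix.fromCols
          ((trafficA n m ι α1 α2 α3).map Complex.ofReal -
            lam • (1 : Matrix (Fin (2 * n)) (Fin (2 * n)) ℂ))
          ((trafficB n m ι).map Complex.ofReal)).rank = 2 * n := by
  intro lam hlam
  refine (rank_eq_card_of_vecMul_eq_zero fun v hv => ?_).trans (Fintype.card_fin _)
  rw [vecMul_fromCols, ← Sum.elim_zero_zero, Sum.elim_eq_iff] at hv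
  obtain ⟨hvA, hvB⟩ := hv
  refine eq_zero_of_forall_blockIdx fun i hvi => congrFun ?_
  have hblock := vecMul_comp_blockIdx (trafficA_map_sub_smul_blockTriangular ι α1 α2 α3 lam) hvi
  rw [hvA, trafficA_map_sub_smul_submatrix_blockIdx] at hblock
  split_ifs at hblock with hcav
  · obtain ⟨k, rfl⟩ := hcav
    have hv1 : v (blockIdx (ι k) 1) = 0 := by rw [← vecMul_trafficB_map ι v k, hvB]; rfl
    exact eq_zero_of_vecMul_matS1_map_sub_smul hv1 hblock.symm
  · exact eq_zero_of_vecMul_matP1_map_sub_smul hα1 (hα3.trans hα23) hlam hblock.symm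

/-- **Theorem 1(2), stabilizability (PBH test).** If `α₁ − α₂α₃ + α₃² ≠ 0`, the
mixed-traffic pair `(A, B)` is stabilizable: for every complex `λ` with
`Re(λ) ≥ 0`, the matrix `[A − λI, B] ∈ ℂ^{2n×(2n+m)}` has rank `2n`. -/
theorem mixed_traffic_stabilizable
    (n m : ℕ) (hn : 1 ≤ n) (hm : 1 ≤ m) (hmn : m ≤ n)
    (ι : Fin m → Fin n) (hmono : StrictMono ι)
    (α1 α2 α3 : ℝ) (hα1 : 0 < α1) (hα3 : 0 < α3) (hα23 : α3 < α2)
    (hcond : α1 - α2 * α3 + α3 ^ 2 ≠ 0) :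
    ∀ lam : ℂ, 0 ≤ lam.re →
      (Matrix.fromCols
          ((trafficA n m ι α1 α2 α3).map Complex.ofReal -
            lam • (1 : Matrix (Fin (2 * n)) (Fin (2 * n)) ℂ))
          ((trafficB n m ι).map Complex.ofReal)).rank = 2 * n :=
  mixed_traffic_stabilizable_general n m ι α1 α2 α3 hα1 hα3 hα23
end

section
/- Let (u^d, y^d) be a trajectory of length T of the discrete-time LTI system (A, B, C), and let 1 ≤ L ≤ T. Then for every vector g ∈ ℝ^{T−L+1}, the pair of signals (H_L(u^d) g, H_L(y^d) g) (reading the stacked vectors block-wise as signals of length L) is itself a trajectory of length L of the system (A, B, C). -/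
open Matrix

/-- `(u, y)` is a trajectory of length `L` of the discrete-time LTI system
`(A, B, C)`: there is a state sequence `x` with `x(k+1) = A x(k) + B u(k)` and
`y(k) = C x(k)` for all `0 ≤ k ≤ L−1`. -/
def IsTrajectory {ns q p : ℕ} (A : Matrix (Fin ns) (Fin ns) ℝ)
    (B : Matrix (Fin ns) (Fin q) ℝ) (C : Matrix (Fin p) (Fin ns) ℝ)
    (L : ℕ) (u : ℕ → Fin q → ℝ) (y : ℕ → Fin p → ℝ) : Prop :=
  ∃ x : ℕ → Fin ns → ℝ,
    ∀ k < L, x (k + 1) = A.mulVec (x k) + B.mulVec (u k) ∧ y k = C.mulVec (x k)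

/-- The block Hankel matrix `H_L(ω) ∈ ℝ^{qL×(T−L+1)}` of depth `L` of a signal
`ω : {0,…,T−1} → ℝ^q`: its `((i,a), j)` entry is `ω(i+j)(a)`. -/
def hankelMat {q : ℕ} (L T : ℕ) (ω : ℕ → Fin q → ℝ) :
    Matrix (Fin L × Fin q) (Fin (T - L + 1)) ℝ :=
  Matrix.of fun ia j => ω ((ia.1 : ℕ) + (j : ℕ)) ia.2

/-- If `(u^d, y^d)` is a trajectory of length `T` of the LTI system `(A, B, C)` and
`1 ≤ L ≤ T`, then for every `g ∈ ℝ^{T−L+1}` the pair `(H_L(u^d) g, H_L(y^d) g)`,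
read block-wise as signals of length `L`, is a trajectory of length `L` of
`(A, B, C)`. -/
theorem hankel_mulVec_isTrajectory
    {ns q p : ℕ} (A : Matrix (Fin ns) (Fin ns) ℝ) (B : Matrix (Fin ns) (Fin q) ℝ)
    (C : Matrix (Fin p) (Fin ns) ℝ) (T L : ℕ) (hL : 1 ≤ L) (hLT : L ≤ T)
    (ud : ℕ → Fin q → ℝ) (yd : ℕ → Fin p → ℝ)
    (htraj : IsTrajectory A B C T ud yd) (g : Fin (T - L + 1) → ℝ) :
    IsTrajectory A B C L
      (fun k a => if h : k < L then (hankelMat L T ud).mulVec g (⟨k, h⟩, a) else 0)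
      (fun k b => if h : k < L then (hankelMat L T yd).mulVec g (⟨k, h⟩, b) else 0) := by
  obtain ⟨x, hx⟩ := htraj
  refine ⟨fun k i => ∑ j : Fin (T - L + 1), g j * x (k + j) i, ?_⟩
  intro k hk
  have hkj : ∀ j : Fin (T - L + 1), k + (j : ℕ) < T := by
    intro j
    have hj : (j : ℕ) ≤ T - L := Nat.lt_succ_iff.mp j.isLt
    omega
  have hstep : ∀ j : Fin (T - L + 1),
      x (k + (j : ℕ) + 1) = A.mulVec (x (k + j)) + B.mulVec (ud (k + j)) ∧
      yd (k + (j : ℕ)) = C.mulVec (x (k + j)) := fun j => hx _ (hkj j)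
  constructor
  · funext i
    simp only [dif_pos hk, mulVec, dotProduct, hankelMat, of_apply, Pi.add_apply]
    have : ∀ j : Fin (T - L + 1), x (k + 1 + (j : ℕ)) i
        = ∑ m, A i m * x (k + j) m + ∑ a, B i a * ud (k + j) a := by
      intro j
      have h1 : k + 1 + (j : ℕ) = k + (j : ℕ) + 1 := by ring
      rw [h1, (hstep j).1]
      simp [mulVec, dotProduct]
    simp only [this]
    simp only [Finset.mul_sum, mul_add, Finset.sum_add_distrib]
    congr 1
    · rw [Finset.sum_comm]
      exact Finset.sum_congr rfl fun m _ => Finset.sum_congr rfl fun j _ => by ring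
    · rw [Finset.sum_comm]
      exact Finset.sum_congr rfl fun a _ => Finset.sum_congr rfl fun j _ => by ring
  · funext b
    simp only [dif_pos hk, mulVec, dotProduct, hankelMat, of_apply]
    have : ∀ j : Fin (T - L + 1), yd (k + (j : ℕ)) b = ∑ m, C b m * x (k + j) m := by
      intro j; rw [(hstep j).2]; simp [mulVec, dotProduct]
    simp only [this, Finset.sum_mul, Finset.mul_sum]
    rw [Finset.sum_comm]
    exact Finset.sum_congr rfl fun m _ => Finset.sum_congr rfl fun j _ => by ring
end
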